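/- arXiv:2009.12051 — 9 statements merged into one kernel-verified Lean document; each statement's English description precedes it below -/
import Mathlib

section
/- Let R be a commutative ring, let m be a unit of R and u ∈ R. Set A = [[m, 1], [0, m⁻¹]] and B = [[m, 0], [−u, m⁻¹]] in M₂(R), let W ∈ M₂(R) have determinant 1 and satisfy W₂₁ = −u·W₁₂, and put φ = W₁₁ − (m − m⁻¹)W₁₂. Then W·A·W⁻¹·B⁻¹ = I + φ·M, where I is the identity matrix and M = [[W₁₁u − W₂₁m⁻¹, W₁₁m], [W₂₁u + W₂₂um⁻¹, W₂₁m]]. -/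
open Matrix

theorem stmt_1 {R : Type*} [CommRing R] (m : Rˣ) (u : R)
    (W : Matrix (Fin 2) (Fin 2) R) (hW : W.det = 1)
    (hsym : W 1 0 = -u * W 0 1) :
    W * !![(m : R), 1; 0, (↑m⁻¹ : R)] *
      !![W 1 1, -W 0 1; -W 1 0, W 0 0] * !![(↑m⁻¹ : R), 0; u, (m : R)] =
    1 + (W 0 0 - ((m : R) - (↑m⁻¹ : R)) * W 0 1) •
        !![W 0 0 * u - W 1 0 * (↑m⁻¹ : R), W 0 0 * (m : R);
           W 1 0 * u + W 1 1 * u * (↑m⁻¹ : R), W 1 0 * (m : R)] := by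
  have hdet : W 0 0 * W 1 1 - W 0 1 * W 1 0 = 1 := by
    simpa [Matrix.det_fin_two] using hW
  have h1 : (m : R) * (↑m⁻¹ : R) = 1 := m.mul_inv
  have hWe : W = !![W 0 0, W 0 1; W 1 0, W 1 1] := by
    ext i j; fin_cases i <;> fin_cases j <;> simp
  rw [hWe]
  ext i j
  fin_cases i <;> fin_cases j <;>
    simp [Matrix.mul_apply, Fin.sum_univ_succ, Matrix.one_apply]
  · linear_combination ((m:R) * (↑m⁻¹:R)) * hdet + h1
  · ring
  · linear_combination
      ((↑m⁻¹:R) * (((m:R) - (↑m⁻¹:R)) * W 1 1 - W 1 0)) * hsym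
  · linear_combination ((m:R) * (↑m⁻¹:R)) * hdet + h1
end

section
/- (Riley's symmetry for two-bridge words.) With the two-bridge setup over ℂ[u], the (2,1)-entry and (1,2)-entry of W satisfy W₂₁ = −u·W₁₂ in ℂ[u]. -/
open Matrix Polynomial

/-- `ε_i = (−1)^⌊iq/p⌋`. -/
def eps (p : ℕ) (q : ℤ) (i : ℕ) : ℤ :=
  if ((i : ℤ) * q).fdiv p % 2 = 0 then 1 else -1

/-- `G₁ = [[d, 1], [0, d⁻¹]]` over `ℂ[u]`. -/
noncomputable def G1 (d : ℂ) : Matrix (Fin 2) (Fin 2) (Polynomial ℂ) :=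
  !![C d, 1; 0, C d⁻¹]

/-- `G₂ = [[d, 0], [−u, d⁻¹]]` over `ℂ[u]`. -/
noncomputable def G2 (d : ℂ) : Matrix (Fin 2) (Fin 2) (Polynomial ℂ) :=
  !![C d, 0; -X, C d⁻¹]

/-- `W = G₁^{ε₁}·G₂^{ε₂}·⋯·G₁^{ε_{p−2}}·G₂^{ε_{p−1}}`. -/
noncomputable def twoBridgeW (p : ℕ) (q : ℤ) (d : ℂ) :
    Matrix (Fin 2) (Fin 2) (Polynomial ℂ) :=
  ((List.range (p - 1)).map
    (fun i => (if (i + 1) % 2 = 1 then G1 d else G2 d) ^ eps p q (i + 1))).prod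

/-- The symmetrizing diagonal matrix `D = diag(1, −u)`. -/
noncomputable def Dm : Matrix (Fin 2) (Fin 2) (Polynomial ℂ) := !![1, 0; 0, -X]

lemma tr2 (a b c e : Polynomial ℂ) : (!![a, b; c, e])ᵀ = !![a, c; b, e] := by
  ext i j
  fin_cases i <;> fin_cases j <;> rfl

lemma swap1 (d : ℂ) : Dm * (G1 d)ᵀ = G2 d * Dm := by
  rw [Dm, G1, G2, tr2, Matrix.mul_fin_two, Matrix.mul_fin_two]
  congr 1 <;> ring

lemma swap2 (d : ℂ) : Dm * (G2 d)ᵀ = G1 d * Dm := by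
  rw [Dm, G1, G2, tr2, Matrix.mul_fin_two, Matrix.mul_fin_two]
  congr 1 <;> ring

lemma G1_inv (d : ℂ) (hd : d ≠ 0) : (G1 d)⁻¹ = !![C d⁻¹, -1; 0, C d] := by
  apply Matrix.inv_eq_right_inv
  have h : C d * C d⁻¹ = (1 : Polynomial ℂ) := by
    rw [← C_mul, mul_inv_cancel₀ hd, C_1]
  have h' : C d⁻¹ * C d = (1 : Polynomial ℂ) := by
    rw [← C_mul, inv_mul_cancel₀ hd, C_1]
  rw [G1, Matrix.mul_fin_two, Matrix.one_fin_two]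
  congr 1 <;> simp [h, h'] <;> ring

lemma G2_inv (d : ℂ) (hd : d ≠ 0) : (G2 d)⁻¹ = !![C d⁻¹, 0; X, C d] := by
  apply Matrix.inv_eq_right_inv
  have h : C d * C d⁻¹ = (1 : Polynomial ℂ) := by
    rw [← C_mul, mul_inv_cancel₀ hd, C_1]
  have h' : C d⁻¹ * C d = (1 : Polynomial ℂ) := by
    rw [← C_mul, inv_mul_cancel₀ hd, C_1]
  rw [G2, Matrix.mul_fin_two, Matrix.one_fin_two]
  congr 1 <;> simp [h, h'] <;> ring

lemma swap1inv (d : ℂ) (hd : d ≠ 0) : Dm * ((G1 d)⁻¹)ᵀ = (G2 d)⁻¹ * Dm := by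
  rw [G1_inv d hd, G2_inv d hd, Dm, tr2, Matrix.mul_fin_two, Matrix.mul_fin_two]
  congr 1 <;> ring

lemma swap2inv (d : ℂ) (hd : d ≠ 0) : Dm * ((G2 d)⁻¹)ᵀ = (G1 d)⁻¹ * Dm := by
  rw [G1_inv d hd, G2_inv d hd, Dm, tr2, Matrix.mul_fin_two, Matrix.mul_fin_two]
  congr 1 <;> ring

lemma eps_pal (p : ℕ) (q : ℤ) (hq : Odd q) (hpq : IsCoprime (p : ℤ) q)
    (i : ℕ) (h1 : 1 ≤ i) (h2 : i < p) : eps p q (p - i) = eps p q i := by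
  have hp0 : 0 < p := lt_of_le_of_lt (Nat.zero_le i) h2
  have hpz : (0 : ℤ) < (p : ℤ) := by exact_mod_cast hp0
  set a : ℤ := (i : ℤ) * q with ha
  have hnd : ¬ ((p : ℤ) ∣ a) := by
    intro hdvd
    have hpi : (p : ℤ) ∣ (i : ℤ) := hpq.dvd_of_dvd_mul_right hdvd
    have := Int.le_of_dvd (by exact_mod_cast h1) hpi
    omega
  have hm1 : 0 ≤ a % (p : ℤ) := Int.emod_nonneg a (ne_of_gt hpz)
  have hm2 : a % (p : ℤ) < p := Int.emod_lt_of_pos a hpz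
  have hm0 : a % (p : ℤ) ≠ 0 := fun h => hnd (Int.dvd_of_emod_eq_zero h)
  have hneg : (-a) / (p : ℤ) = -(a / p) - 1 := by
    have key := (Int.ediv_emod_unique (a := -a) (b := (p : ℤ))
      (r := (p : ℤ) - a % p) (q := -(a / p) - 1) hpz).2
    have hsum : (p : ℤ) - a % p + p * (-(a / p) - 1) = -a := by
      have := Int.emod_add_mul_ediv a (p : ℤ)
      ring_nf
      ring_nf at this
      omega
    exact (key ⟨hsum, by omega, by omega⟩).1
  have hcast : ((p - i : ℕ) : ℤ) = (p : ℤ) - i := by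
    have : i ≤ p := le_of_lt h2
    push_cast [Nat.cast_sub this]; ring
  have hkey : (((p - i : ℕ) : ℤ) * q).fdiv p = q - 1 - a.fdiv p := by
    rw [hcast]
    rw [Int.fdiv_eq_ediv_of_nonneg _ (le_of_lt hpz), Int.fdiv_eq_ediv_of_nonneg _ (le_of_lt hpz)]
    have : ((p : ℤ) - i) * q = -a + q * p := by rw [ha]; ring
    rw [this, Int.add_mul_ediv_right _ _ (ne_of_gt hpz), hneg]
    ring
  unfold eps
  rw [hkey, Int.fdiv_eq_ediv_of_nonneg _ (le_of_lt hpz)]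
  obtain ⟨k, hk⟩ := hq
  split_ifs with hA hB hB <;> omega

lemma prod_transpose_swap (D : Matrix (Fin 2) (Fin 2) (Polynomial ℂ))
    (F F' : ℕ → Matrix (Fin 2) (Fin 2) (Polynomial ℂ))
    (h : ∀ i, D * (F i)ᵀ = F' i * D) (n : ℕ) :
    D * (((List.range n).map F).prod)ᵀ = (((List.range n).reverse.map F').prod) * D := by
  induction n with
  | zero => simp
  | succ n ih =>
    rw [List.range_succ, List.map_append, List.prod_append, List.reverse_append,
      List.map_append, List.prod_append]
    simp only [List.map_cons, List.map_nil, List.prod_cons, List.prod_nil,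
      List.reverse_cons, List.reverse_nil, List.nil_append, Matrix.transpose_mul, mul_one]
    rw [← mul_assoc, h n, mul_assoc, ih, ← mul_assoc]

lemma rev_map_eq (n : ℕ) (F F' : ℕ → Matrix (Fin 2) (Fin 2) (Polynomial ℂ))
    (h : ∀ j < n, F' (n - 1 - j) = F j) :
    (List.range n).reverse.map F' = (List.range n).map F := by
  apply List.ext_getElem
  · simp
  · intro j hj hj'
    have hjn : j < n := by simpa using hj'
    simp only [List.getElem_map, List.getElem_reverse, List.getElem_range,
      List.length_reverse, List.length_range, List.length_map]
    exact h j hjn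

theorem stmt_3 (p : ℕ) (q : ℤ) (hp : Odd p) (hq : Odd q)
    (hpq : IsCoprime (p : ℤ) q) (hp0 : 0 < p)
    (hql : -(p : ℤ) < q) (hqu : q < (p : ℤ))
    (d : ℂ) (hd : d ≠ 0) :
    twoBridgeW p q d 1 0 = -X * twoBridgeW p q d 0 1 := by
  set n := p - 1 with hn
  set F : ℕ → Matrix (Fin 2) (Fin 2) (Polynomial ℂ) :=
    fun i => (if (i + 1) % 2 = 1 then G1 d else G2 d) ^ eps p q (i + 1) with hF
  set F' : ℕ → Matrix (Fin 2) (Fin 2) (Polynomial ℂ) :=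
    fun i => (if (i + 1) % 2 = 1 then G2 d else G1 d) ^ eps p q (i + 1) with hF'
  have hswap : ∀ i, Dm * (F i)ᵀ = F' i * Dm := by
    intro i
    rw [hF, hF']
    simp only
    rcases eq_or_ne (((((i + 1 : ℕ) : ℤ) * q).fdiv p) % 2) 0 with he | he
    · have : eps p q (i + 1) = 1 := by unfold eps; rw [if_pos he]
      rw [this, zpow_one, zpow_one]
      split_ifs
      · exact swap1 d
      · exact swap2 d
    · have : eps p q (i + 1) = -1 := by unfold eps; rw [if_neg he]
      rw [this, Matrix.zpow_neg_one, Matrix.zpow_neg_one]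
      split_ifs
      · exact swap1inv d hd
      · exact swap2inv d hd
  have hpal : ∀ j < n, F' (n - 1 - j) = F j := by
    intro j hj
    rw [hF, hF']
    simp only
    obtain ⟨m, hm⟩ := hp
    have hidx : n - 1 - j + 1 = p - (j + 1) := by omega
    have hparity : (p - (j + 1)) % 2 = 1 ↔ ¬ ((j + 1) % 2 = 1) := by omega
    have heps : eps p q (p - (j + 1)) = eps p q (j + 1) :=
      eps_pal p q hq hpq (j + 1) (by omega) (by omega)
    rw [hidx, heps]
    by_cases hc : (j + 1) % 2 = 1
    · rw [if_neg (by rw [hparity]; exact fun h => h hc), if_pos hc]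
    · rw [if_pos (hparity.mpr hc), if_neg hc]
  have hmain : Dm * (twoBridgeW p q d)ᵀ = twoBridgeW p q d * Dm := by
    have h1 := prod_transpose_swap Dm F F' hswap n
    rw [rev_map_eq n F F' hpal] at h1
    exact h1
  have h10 := congrFun (congrFun hmain 1) 0
  simp only [Dm, Matrix.mul_apply, Fin.sum_univ_two, Matrix.transpose_apply] at h10
  norm_num at h10
  rw [← h10]
  ring
end

section
/- (Riley.) With the two-bridge setup over ℂ[u], let W† = G₂^{ε₁}·G₁^{ε₂}·⋯·G₂^{ε_{p−2}}·G₁^{ε_{p−1}} be the matrix product obtained from W by exchanging the roles of G₁ and G₂. Then (W†)₂₂ + (d − d⁻¹)(W†)₁₂ = φ_W in ℂ[u]. -/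
open Matrix Polynomial

/-- `W† = G₂^{ε₁}·G₁^{ε₂}·⋯·G₂^{ε_{p−2}}·G₁^{ε_{p−1}}`, obtained from `W` by
exchanging the roles of `G₁` and `G₂`. -/
noncomputable def twoBridgeWdag (p : ℕ) (q : ℤ) (d : ℂ) :
    Matrix (Fin 2) (Fin 2) (Polynomial ℂ) :=
  ((List.range (p - 1)).map
    (fun i => (if (i + 1) % 2 = 1 then G2 d else G1 d) ^ eps p q (i + 1))).prod

noncomputable def Pmat (d : ℂ) : Matrix (Fin 2) (Fin 2) (Polynomial ℂ) :=
  !![C (d - d⁻¹), 1; -X, -C (d - d⁻¹)]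

lemma eps_one_or (p : ℕ) (q : ℤ) (i : ℕ) : eps p q i = 1 ∨ eps p q i = -1 := by
  unfold eps; split <;> simp

lemma PG1 (d : ℂ) : Pmat d * G1 d = G2 d * Pmat d := by
  unfold Pmat G1 G2
  refine Matrix.ext fun i j => ?_
  fin_cases i <;> fin_cases j <;>
    simp [Matrix.mul_apply, Fin.sum_univ_two, map_sub] <;> ring

lemma PG2 (d : ℂ) : Pmat d * G2 d = G1 d * Pmat d := by
  unfold Pmat G1 G2
  refine Matrix.ext fun i j => ?_
  fin_cases i <;> fin_cases j <;>
    simp [Matrix.mul_apply, Fin.sum_univ_two, map_sub] <;> ring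

lemma hCd (d : ℂ) (hd : d ≠ 0) : (C d : Polynomial ℂ) * C d⁻¹ = 1 := by
  rw [← C_mul, mul_inv_cancel₀ hd, C_1]

lemma PG1inv (d : ℂ) (hd : d ≠ 0) : Pmat d * (G1 d)⁻¹ = (G2 d)⁻¹ * Pmat d := by
  rw [G1_inv d hd, G2_inv d hd]
  unfold Pmat
  refine Matrix.ext fun i j => ?_
  fin_cases i <;> fin_cases j <;>
    simp [Matrix.mul_apply, Fin.sum_univ_two, map_sub] <;> ring

lemma PG2inv (d : ℂ) (hd : d ≠ 0) : Pmat d * (G2 d)⁻¹ = (G1 d)⁻¹ * Pmat d := by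
  rw [G1_inv d hd, G2_inv d hd]
  unfold Pmat
  refine Matrix.ext fun i j => ?_
  fin_cases i <;> fin_cases j <;>
    simp [Matrix.mul_apply, Fin.sum_univ_two, map_sub] <;> ring

lemma zpow_conj (d : ℂ) (A B : Matrix (Fin 2) (Fin 2) (Polynomial ℂ))
    (h1 : Pmat d * A = B * Pmat d) (h2 : Pmat d * A⁻¹ = B⁻¹ * Pmat d)
    (e : ℤ) (he : e = 1 ∨ e = -1) : Pmat d * A ^ e = B ^ e * Pmat d := by
  rcases he with rfl | rfl
  · simpa using h1
  · rw [Matrix.zpow_neg_one, Matrix.zpow_neg_one]; exact h2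

lemma prod_conj (d : ℂ) (f g : ℕ → Matrix (Fin 2) (Fin 2) (Polynomial ℂ))
    (h : ∀ i, Pmat d * f i = g i * Pmat d) (n : ℕ) :
    Pmat d * ((List.range n).map f).prod = ((List.range n).map g).prod * Pmat d := by
  induction n with
  | zero => simp
  | succ n ih =>
    rw [List.range_succ]
    simp only [List.map_append, List.prod_append, List.map_singleton, List.prod_singleton]
    rw [← mul_assoc, ih, mul_assoc, h, ← mul_assoc]

lemma key (p : ℕ) (q : ℤ) (d : ℂ) (hd : d ≠ 0) :
    Pmat d * twoBridgeW p q d = twoBridgeWdag p q d * Pmat d := by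
  unfold twoBridgeW twoBridgeWdag
  apply prod_conj
  intro i
  by_cases h : (i + 1) % 2 = 1
  · simp only [if_pos h]
    exact zpow_conj d _ _ (PG1 d) (PG1inv d hd) _ (eps_one_or p q (i+1))
  · simp only [if_neg h]
    exact zpow_conj d _ _ (PG2 d) (PG2inv d hd) _ (eps_one_or p q (i+1))

theorem stmt_4 (p : ℕ) (q : ℤ) (hp : Odd p) (hq : Odd q)
    (hpq : IsCoprime (p : ℤ) q) (hp0 : 0 < p)
    (hql : -(p : ℤ) < q) (hqu : q < (p : ℤ))
    (d : ℂ) (hd : d ≠ 0) :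
    twoBridgeWdag p q d 1 1 + C (d - d⁻¹) * twoBridgeWdag p q d 0 1 =
      twoBridgeW p q d 0 0 - C (d - d⁻¹) * twoBridgeW p q d 0 1 := by
  set W := twoBridgeW p q d with hW
  set V := twoBridgeWdag p q d with hV
  have hk := key p q d hd
  have h11 : (Pmat d * W) 0 0 = (V * Pmat d) 0 0 := by rw [hk]
  have h12 : (Pmat d * W) 0 1 = (V * Pmat d) 0 1 := by rw [hk]
  have h21 : (Pmat d * W) 1 0 = (V * Pmat d) 1 0 := by rw [hk]
  have h22 : (Pmat d * W) 1 1 = (V * Pmat d) 1 1 := by rw [hk]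
  simp only [Matrix.mul_apply, Fin.sum_univ_two, Pmat, Matrix.cons_val', Matrix.cons_val_zero,
    Matrix.cons_val_one, Matrix.head_cons, Matrix.empty_val', Matrix.cons_val_fin_one,
    Matrix.head_fin_const, Matrix.of_apply] at h11 h12 h21 h22
  have ht : (C (d - d⁻¹) ^ 2 - X : Polynomial ℂ) ≠ 0 := by
    intro h
    have h1 : (C (d - d⁻¹) ^ 2 - X : Polynomial ℂ).coeff 1 = -1 := by
      rw [← C_pow, Polynomial.coeff_sub, Polynomial.coeff_C, Polynomial.coeff_X_one]
      norm_num
    rw [h] at h1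
    simp at h1
  apply mul_left_cancel₀ ht
  linear_combination (-1 : Polynomial ℂ) * h21 + C (d - d⁻¹) * h22 - C (d - d⁻¹) * h11
    + C (d - d⁻¹) ^ 2 * h12
end

section
/- Let p and q be relatively prime odd integers with p ≥ 3 and −p < q < p. Then there exists a unique integer k with 0 < k < p such that kq ≡ 1 (mod 2p) or kq ≡ −1 (mod 2p); moreover this k is odd. -/
theorem stmt_5 (p : ℕ) (q : ℤ) (hp : Odd p) (hq : Odd q)
    (hpq : IsCoprime (p : ℤ) q) (hp3 : 3 ≤ p)
    (hql : -(p : ℤ) < q) (hqu : q < (p : ℤ)) :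
    (∃! k : ℕ, 0 < k ∧ k < p ∧
        ((k : ℤ) * q ≡ 1 [ZMOD (2 * p)] ∨ (k : ℤ) * q ≡ -1 [ZMOD (2 * p)])) ∧
      ∀ k : ℕ, 0 < k → k < p →
        ((k : ℤ) * q ≡ 1 [ZMOD (2 * p)] ∨ (k : ℤ) * q ≡ -1 [ZMOD (2 * p)]) →
        Odd k := by
  obtain ⟨m, hm⟩ := hq
  have hpz : (3 : ℤ) ≤ (p : ℤ) := by exact_mod_cast hp3
  set N : ℤ := 2 * (p : ℤ) with hNdef
  have hNpos : (0 : ℤ) < N := by positivity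
  have h2q : IsCoprime (2 : ℤ) q := ⟨-m, 1, by rw [hm]; ring⟩
  have hcop : IsCoprime N q := h2q.mul_left hpq
  -- Oddness part
  have hodd : ∀ k : ℕ, 0 < k → k < p →
      ((k : ℤ) * q ≡ 1 [ZMOD N] ∨ (k : ℤ) * q ≡ -1 [ZMOD N]) → Odd k := by
    intro k _ _ hk
    have hdvd2 : (2 : ℤ) ∣ (k : ℤ) * q - 1 := by
      rcases hk with hk | hk
      · have := hk.dvd
        have h2N : (2 : ℤ) ∣ N := ⟨(p : ℤ), rfl⟩
        have : (2 : ℤ) ∣ 1 - (k : ℤ) * q := h2N.trans this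
        exact (dvd_sub_comm).mp this
      · have := hk.dvd
        have h2N : (2 : ℤ) ∣ N := ⟨(p : ℤ), rfl⟩
        have h2 : (2 : ℤ) ∣ -1 - (k : ℤ) * q := h2N.trans this
        obtain ⟨c, hc⟩ := h2
        exact ⟨-c - 1, by linarith⟩
    obtain ⟨c, hc⟩ := hdvd2
    have : Odd (k : ℤ) := by
      refine ⟨c - (k : ℤ) * m, ?_⟩
      have : (k : ℤ) * (2 * m + 1) - 1 = 2 * c := by rw [← hm]; exact hc
      linarith
    exact Int.odd_coe_nat k |>.mp this
  -- Uniqueness part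
  have key : ∀ k1 k2 : ℕ, 0 < k1 → k1 < p → 0 < k2 → k2 < p →
      ((k1 : ℤ) * q ≡ 1 [ZMOD N] ∨ (k1 : ℤ) * q ≡ -1 [ZMOD N]) →
      ((k2 : ℤ) * q ≡ 1 [ZMOD N] ∨ (k2 : ℤ) * q ≡ -1 [ZMOD N]) →
      k1 = k2 := by
    intro k1 k2 h1 h1p h2 h2p hc1 hc2
    have h1p' : (k1 : ℤ) < p := by exact_mod_cast h1p
    have h2p' : (k2 : ℤ) < p := by exact_mod_cast h2p
    have h1' : (0 : ℤ) < k1 := by exact_mod_cast h1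
    have h2' : (0 : ℤ) < k2 := by exact_mod_cast h2
    have same : ∀ (e : ℤ), (k1 : ℤ) * q ≡ e [ZMOD N] → (k2 : ℤ) * q ≡ e [ZMOD N] → k1 = k2 := by
      intro e he1 he2
      have hsub := he1.sub he2
      have hd : N ∣ ((k1 : ℤ) - k2) * q := by
        have := hsub.dvd
        have : N ∣ (k1 : ℤ) * q - (k2 : ℤ) * q := by
          obtain ⟨c, hc⟩ := this
          exact ⟨-c, by linarith⟩
        simpa [sub_mul] using this
      have hd2 : N ∣ ((k1 : ℤ) - k2) := hcop.dvd_of_dvd_mul_right hd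
      have : (k1 : ℤ) - k2 = 0 := Int.eq_zero_of_abs_lt_dvd hd2 (by
        rw [abs_lt]; constructor <;> linarith)
      have : (k1 : ℤ) = k2 := by linarith
      exact_mod_cast this
    have cross : ∀ (e : ℤ), e = 1 ∨ e = -1 →
        (k1 : ℤ) * q ≡ e [ZMOD N] → (k2 : ℤ) * q ≡ -e [ZMOD N] → False := by
      intro e he he1 he2
      have hadd := he1.add he2
      have h0 : (e : ℤ) + -e = 0 := by ring
      rw [h0] at hadd
      have hd : N ∣ ((k1 : ℤ) + k2) * q := by
        have := hadd.dvd
        have : N ∣ (k1 : ℤ) * q + (k2 : ℤ) * q := by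
          obtain ⟨c, hc⟩ := this
          exact ⟨-c, by linarith⟩
        simpa [add_mul] using this
      have hd2 : N ∣ ((k1 : ℤ) + k2) := hcop.dvd_of_dvd_mul_right hd
      have := Int.le_of_dvd (by linarith) hd2
      simp only [hNdef] at this
      linarith
    rcases hc1 with hc1 | hc1 <;> rcases hc2 with hc2 | hc2
    · exact same 1 hc1 hc2
    · exact (cross 1 (Or.inl rfl) hc1 hc2).elim
    · exact (cross (-1) (Or.inr rfl) hc1 (by simpa using hc2)).elim
    · exact same (-1) hc1 hc2
  -- Existence
  obtain ⟨a, b, hab⟩ := hcop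
  have hbq : b * q ≡ 1 [ZMOD N] := Int.ModEq.symm (Int.modEq_iff_dvd.mpr ⟨-a, by linarith⟩)
  set r : ℤ := b % N with hrdef
  have hr0 : 0 ≤ r := Int.emod_nonneg b (ne_of_gt hNpos)
  have hrN : r < N := Int.emod_lt_of_pos b hNpos
  have hrb : r ≡ b [ZMOD N] := Int.emod_emod_of_dvd b dvd_rfl
  have hrq : r * q ≡ 1 [ZMOD N] := (hrb.mul_right q).trans hbq
  have hrne0 : r ≠ 0 := by
    intro h
    rw [h, zero_mul] at hrq
    have hd : N ∣ (1 : ℤ) := by simpa using hrq.dvd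
    have := Int.le_of_dvd one_pos hd
    linarith
  have hrnep : r ≠ (p : ℤ) := by
    intro h
    rw [h] at hrq
    have hpq1 : (p : ℤ) ≡ 1 [ZMOD N] := by
      have hstep : (p : ℤ) * q ≡ (p : ℤ) [ZMOD N] := by
        apply (Int.modEq_iff_dvd.mpr _).symm
        exact ⟨m, by rw [hm]; ring⟩
      exact hstep.symm.trans hrq
    have hdd := hpq1.dvd
    have : (1 : ℤ) - p = 0 := Int.eq_zero_of_abs_lt_dvd hdd (by rw [abs_lt]; constructor <;> linarith)
    linarith
  have main : ∃ k : ℕ, 0 < k ∧ k < p ∧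
      ((k : ℤ) * q ≡ 1 [ZMOD N] ∨ (k : ℤ) * q ≡ -1 [ZMOD N]) := by
    by_cases hcase : r < (p : ℤ)
    · refine ⟨r.toNat, ?_, ?_, Or.inl ?_⟩
      · omega
      · omega
      · rw [Int.toNat_of_nonneg hr0]; exact hrq
    · push_neg at hcase
      have hrp : (p : ℤ) < r := lt_of_le_of_ne hcase (Ne.symm hrnep)
      refine ⟨(N - r).toNat, ?_, ?_, Or.inr ?_⟩
      · omega
      · omega
      · rw [Int.toNat_of_nonneg (by linarith)]
        obtain ⟨c, hc⟩ := hrq.dvd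
        apply (Int.modEq_iff_dvd.mpr _).symm
        exact ⟨c + q, by linarith⟩
  obtain ⟨k, hk1, hk2, hk3⟩ := main
  exact ⟨⟨k, ⟨hk1, hk2, hk3⟩, fun y hy => key y k hy.1 hy.2.1 hk1 hk2 hy.2.2 hk3⟩, hodd⟩
end

section
/- In the free group F on two generators g₁, g₂, with the two-bridge word data as in the context, one has v′⁻¹·(w g₁ w⁻¹ g₂⁻¹)·v′ = g₁ · w† · g₂⁻¹ · (w†)⁻¹, where v′ = g₁^{ε₁} g₂^{ε₂} ⋯ g₁^{ε_{k−2}} g₂^{ε_{k−1}} if ε_k = 1, and v′ = g₂ · g₁^{ε₁} g₂^{ε₂} ⋯ g₂^{ε_{k−1}} g₁^{ε_k} if ε_k = −1. -/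
/-- The free group on two generators. -/
abbrev F2 := FreeGroup (Fin 2)

def g1 : F2 := FreeGroup.of 0
def g2 : F2 := FreeGroup.of 1

/-- `w = g₁^{ε₁} g₂^{ε₂} ⋯ g₁^{ε_{p−2}} g₂^{ε_{p−1}}`. -/
def wWord (p : ℕ) (q : ℤ) : F2 :=
  ((List.range (p - 1)).map
    (fun i => (if (i + 1) % 2 = 1 then g1 else g2) ^ eps p q (i + 1))).prod

/-- `w† = g₂^{ε₁} g₁^{ε₂} ⋯ g₂^{ε_{p−2}} g₁^{ε_{p−1}}`. -/
def wDagWord (p : ℕ) (q : ℤ) : F2 :=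
  ((List.range (p - 1)).map
    (fun i => (if (i + 1) % 2 = 1 then g2 else g1) ^ eps p q (i + 1))).prod

/-- `v′ = g₁^{ε₁} g₂^{ε₂} ⋯ g₁^{ε_{k−2}} g₂^{ε_{k−1}}` if `ε_k = 1`, and
`v′ = g₂ · g₁^{ε₁} g₂^{ε₂} ⋯ g₂^{ε_{k−1}} g₁^{ε_k}` if `ε_k = −1`. -/
def vPrime (p : ℕ) (q : ℤ) (k : ℕ) : F2 :=
  if eps p q k = 1 then
    ((List.range (k - 1)).map
      (fun i => (if (i + 1) % 2 = 1 then g1 else g2) ^ eps p q (i + 1))).prod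
  else
    g2 * ((List.range k).map
      (fun i => (if (i + 1) % 2 = 1 then g1 else g2) ^ eps p q (i + 1))).prod


namespace Stmt6Aux

lemma ediv_pred {N n : ℤ} (hN : 0 < N) (h : ¬ N ∣ n) : (n - 1) / N = n / N := by
  have h0 : 0 ≤ n % N := Int.emod_nonneg n (by omega)
  have h1 : n % N ≠ 0 := fun hc => h (Int.dvd_of_emod_eq_zero hc)
  have h2 : n % N < N := Int.emod_lt_of_pos n hN
  have key : n - 1 = (n % N - 1) + N * (n / N) := by
    linear_combination -(Int.emod_add_mul_ediv n N)
  rw [key, Int.add_mul_ediv_left _ _ (by omega),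
    Int.ediv_eq_zero_of_lt (by omega) (by omega)]
  omega

lemma ediv_neg_sub_one {N : ℤ} (hN : 0 < N) (n : ℤ) : (-n - 1) / N = -1 - n / N := by
  have h0 : 0 ≤ n % N := Int.emod_nonneg n (by omega)
  have h2 : n % N < N := Int.emod_lt_of_pos n hN
  have key : -n - 1 = (N - 1 - n % N) + N * (-1 - n / N) := by
    linear_combination Int.emod_add_mul_ediv n N
  rw [key, Int.add_mul_ediv_left _ _ (by omega),
    Int.ediv_eq_zero_of_lt (by omega) (by omega)]
  omega

/-- integer version of eps -/
def epsI (p : ℕ) (q i : ℤ) : ℤ := if i * q / (p : ℤ) % 2 = 0 then 1 else -1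

/-- exponents of the relator word, `δ i = (−1)^⌊(2iq−1)/(2p)⌋` -/
def del (p : ℕ) (q i : ℤ) : ℤ := if (2 * i * q - 1) / (2 * (p : ℤ)) % 2 = 0 then 1 else -1

/-- letters: `g₁` at odd positions, `g₂` at even positions -/
def aL (i : ℤ) : F2 := if i % 2 = 0 then g2 else g1

def cL (p : ℕ) (q : ℤ) (i : ℤ) : F2 := aL i ^ del p q i

def dd (p : ℕ) (q : ℤ) (j : ℤ) : F2 := aL (j + 1) ^ epsI p q j

section Arith
variable {p : ℕ} {q : ℤ} (hp3 : 3 ≤ p) (hq : q % 2 = 1) (hpq : IsCoprime (p : ℤ) q)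

lemma hp0' (hp3 : 3 ≤ p) : (0 : ℤ) < (p : ℤ) := by exact_mod_cast Nat.lt_of_lt_of_le (by norm_num) hp3

lemma ndvd (hp3 : 3 ≤ p) (hpq : IsCoprime (p : ℤ) q) {i : ℤ} (h0 : 0 < i) (h1 : i < p) :
    ¬ (p : ℤ) ∣ i * q := by
  intro hd
  have h2 := hpq.dvd_of_dvd_mul_right hd
  have := Int.le_of_dvd h0 h2
  omega

lemma eps_eq_epsI (hp3 : 3 ≤ p) (m : ℕ) : eps p q m = epsI p q (m : ℤ) := by
  unfold eps epsI
  rw [Int.fdiv_eq_ediv_of_nonneg _ (le_of_lt (hp0' hp3))]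

lemma epsI_zero : epsI p q 0 = 1 := by
  unfold epsI; norm_num

lemma epsI_p (hp3 : 3 ≤ p) (hq : q % 2 = 1) : epsI p q (p : ℤ) = -1 := by
  unfold epsI
  rw [Int.mul_ediv_cancel_left q (by have := hp0' hp3; omega)]
  split_ifs with h <;> omega

lemma epsI_add_p (hp3 : 3 ≤ p) (hq : q % 2 = 1) (j : ℤ) :
    epsI p q (j + p) = - epsI p q j := by
  unfold epsI
  have h1 : (j + p) * q = j * q + (p : ℤ) * q := by ring
  rw [h1, Int.add_mul_ediv_left _ _ (by have := hp0' hp3; omega)]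
  split_ifs with h2 h3 <;> omega

lemma epsI_neg (hp3 : 3 ≤ p) {j : ℤ} (h : ¬ (p : ℤ) ∣ j * q) :
    epsI p q (-j) = - epsI p q j := by
  unfold epsI
  have h1 : -j * q = -(j * q - 1) - 1 := by ring
  rw [h1, ediv_neg_sub_one (hp0' hp3), ediv_pred (hp0' hp3) h]
  split_ifs with h2 h3 <;> omega

lemma epsI_p_sub (hp3 : 3 ≤ p) (hq : q % 2 = 1) {j : ℤ} (h : ¬ (p : ℤ) ∣ j * q) :
    epsI p q ((p : ℤ) - j) = epsI p q j := by
  have h1 : (p : ℤ) - j = -j + p := by ring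
  rw [h1, epsI_add_p hp3 hq, epsI_neg hp3 h]
  ring

lemma hN' (hp3 : 3 ≤ p) : (0 : ℤ) < 2 * (p : ℤ) := by have := hp0' hp3; omega

lemma del_add_two_p (hp3 : 3 ≤ p) (i : ℤ) : del p q (i + 2 * p) = del p q i := by
  unfold del
  have h1 : 2 * (i + 2 * (p : ℤ)) * q - 1 = (2 * i * q - 1) + (2 * (p : ℤ)) * (2 * q) := by ring
  rw [h1, Int.add_mul_ediv_left _ _ (by have := hN' hp3; omega)]
  split_ifs with h2 h3 <;> omega

lemma del_add_p (hp3 : 3 ≤ p) (hq : q % 2 = 1) (i : ℤ) : del p q (i + p) = - del p q i := by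
  unfold del
  have h1 : 2 * (i + (p : ℤ)) * q - 1 = (2 * i * q - 1) + (2 * (p : ℤ)) * q := by ring
  rw [h1, Int.add_mul_ediv_left _ _ (by have := hN' hp3; omega)]
  split_ifs with h2 h3 <;> omega

lemma two_p_ndvd (hp3 : 3 ≤ p) (hpq : IsCoprime (p : ℤ) q) {i : ℤ} (h0 : 0 < i) (h1 : i < p) :
    ¬ (2 * (p : ℤ)) ∣ 2 * (i * q) := by
  intro hd
  exact ndvd hp3 hpq h0 h1 ((mul_dvd_mul_iff_left (two_ne_zero (α := ℤ))).mp hd)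

lemma del_eq_epsI (hp3 : 3 ≤ p) (hpq : IsCoprime (p : ℤ) q) {i : ℤ} (h0 : 0 < i) (h1 : i < p) :
    del p q i = epsI p q i := by
  unfold del epsI
  have h2 : 2 * i * q - 1 = 2 * (i * q) - 1 := by ring
  rw [h2, ediv_pred (hN' hp3) (two_p_ndvd hp3 hpq h0 h1),
    Int.mul_ediv_mul_of_pos _ _ (by norm_num : (0:ℤ) < 2)]

lemma del_neg (hp3 : 3 ≤ p) (hpq : IsCoprime (p : ℤ) q) {i : ℤ} (h0 : 0 < i) (h1 : i < p) :
    del p q (-i) = - del p q i := by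
  unfold del
  have h2 : 2 * (-i) * q - 1 = -(2 * (i * q)) - 1 := by ring
  have h3 : 2 * i * q - 1 = 2 * (i * q) - 1 := by ring
  rw [h2, h3, ediv_neg_sub_one (hN' hp3), ediv_pred (hN' hp3) (two_p_ndvd hp3 hpq h0 h1)]
  split_ifs with h4 h5 <;> omega

lemma del_shift (hp3 : 3 ≤ p) {t m : ℤ} (hm : t * q = 2 * (p : ℤ) * m + 1) (j : ℤ) :
    del p q (t + j) = epsI p q j := by
  unfold del epsI
  have h1 : 2 * (t + j) * q - 1 = (2 * (j * q) + 1) + (2 * (p : ℤ)) * (2 * m) := by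
    linear_combination 2 * hm
  have hodd : ¬ (2 * (p : ℤ)) ∣ (2 * (j * q) + 1) := by
    intro hd
    have h2 : (2 : ℤ) ∣ 2 * (j * q) + 1 := dvd_trans ⟨(p : ℤ), by ring⟩ hd
    omega
  rw [h1, Int.add_mul_ediv_left _ _ (by have := hN' hp3; omega),
    ← ediv_pred (hN' hp3) hodd]
  have h5 : (2 * (j * q) + 1 - 1) = 2 * (j * q) := by ring
  rw [h5, Int.mul_ediv_mul_of_pos _ _ (by norm_num : (0:ℤ) < 2)]
  split_ifs with h6 h7 <;> omega

lemma del_p (hp3 : 3 ≤ p) (hq : q % 2 = 1) : del p q (p : ℤ) = 1 := by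
  unfold del
  have h1 : 2 * (p : ℤ) * q - 1 = (2 * (p : ℤ) - 1) + (2 * (p : ℤ)) * (q - 1) := by ring
  rw [h1, Int.add_mul_ediv_left _ _ (by have := hN' hp3; omega),
    Int.ediv_eq_zero_of_lt (by have := hN' hp3; omega) (by have := hN' hp3; omega)]
  split_ifs with h2 <;> omega

lemma del_two_p (hp3 : 3 ≤ p) (hq : q % 2 = 1) : del p q (2 * (p : ℤ)) = -1 := by
  unfold del
  have h1 : 2 * (2 * (p : ℤ)) * q - 1 = (2 * (p : ℤ) - 1) + (2 * (p : ℤ)) * (2 * q - 1) := by ring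
  rw [h1, Int.add_mul_ediv_left _ _ (by have := hN' hp3; omega),
    Int.ediv_eq_zero_of_lt (by have := hN' hp3; omega) (by have := hN' hp3; omega)]
  split_ifs with h2 <;> omega

lemma del_zero (hp3 : 3 ≤ p) : del p q 0 = -1 := by
  unfold del
  have h1 : 2 * (0 : ℤ) * q - 1 = -0 - 1 := by ring
  rw [h1, ediv_neg_sub_one (hN' hp3)]
  norm_num

end Arith

lemma map_range_reverse {α : Type*} (f : ℕ → α) (n : ℕ) :
    ((List.range n).map f).reverse = (List.range n).map (fun i => f (n - 1 - i)) := by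
  induction n with
  | zero => simp
  | succ n ih =>
    nth_rewrite 1 [List.range_succ]
    rw [List.map_append, List.reverse_append, ih, List.range_succ_eq_map,
      List.map_cons]
    simp only [List.map_cons, List.map_nil, List.reverse_cons, List.reverse_nil,
      List.nil_append, List.singleton_append, List.map_map]
    congr 1
    norm_num
    intro a _
    congr 1
    omega


section Words

variable {p : ℕ} {q : ℤ}

lemma aL_congr {i j : ℤ} (h : i % 2 = j % 2) : aL i = aL j := by
  unfold aL; rw [h]

lemma aL_natCast (m : ℕ) : aL (m : ℤ) = if m % 2 = 1 then g1 else g2 := by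
  unfold aL
  rcases Nat.mod_two_eq_zero_or_one m with h | h
  · have h2 : (m : ℤ) % 2 = 0 := by omega
    simp [h2, h]
  · have h2 : ¬ ((m : ℤ) % 2 = 0) := by omega
    simp [h2, h]

lemma aL_one : aL 1 = g1 := by unfold aL; norm_num

lemma prod_range_inv (f : ℕ → F2) (n : ℕ) :
    (((List.range n).map f).prod)⁻¹ = ((List.range n).map (fun i => (f (n - 1 - i))⁻¹)).prod := by
  rw [List.prod_inv_reverse, List.map_map, map_range_reverse]
  rfl

def prodW (f : ℤ → F2) (s : ℤ) (l : ℕ) : F2 :=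
  ((List.range l).map fun (j : ℕ) => f (s + (j : ℤ))).prod

lemma prodW_add (f : ℤ → F2) (s : ℤ) (a b : ℕ) :
    prodW f s (a + b) = prodW f s a * prodW f (s + (a : ℤ)) b := by
  unfold prodW
  rw [List.range_add, List.map_append, List.prod_append]
  congr 1
  rw [List.map_map]
  congr 1
  apply List.map_congr_left
  intro x _
  simp only [Function.comp_apply]
  congr 1
  push_cast
  ring

lemma prodW_one (f : ℤ → F2) (s : ℤ) : prodW f s 1 = f s := by
  unfold prodW
  rw [List.range_succ]
  simp

lemma cL_p (hp3 : 3 ≤ p) (hq : q % 2 = 1) (hpz : (p : ℤ) % 2 = 1) :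
    cL p q (p : ℤ) = g1 := by
  unfold cL
  rw [del_p hp3 hq, zpow_one]
  unfold aL
  rw [if_neg (by omega)]

lemma cL_two_p (hp3 : 3 ≤ p) (hq : q % 2 = 1) : cL p q (2 * (p : ℤ)) = g2⁻¹ := by
  unfold cL
  rw [del_two_p hp3 hq, zpow_neg, zpow_one]
  unfold aL
  rw [if_pos (by omega)]

lemma cL_zero (hp3 : 3 ≤ p) : cL p q 0 = g2⁻¹ := by
  unfold cL
  rw [del_zero hp3, zpow_neg, zpow_one]
  unfold aL
  rw [if_pos (by omega)]

lemma cL_period (hp3 : 3 ≤ p) (i : ℤ) : cL p q (i + 2 * (p : ℤ)) = cL p q i := by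
  unfold cL
  rw [aL_congr (show (i + 2 * (p:ℤ)) % 2 = i % 2 by omega), del_add_two_p hp3 i]

lemma cL_pal (hp3 : 3 ≤ p) (hq : q % 2 = 1) (hpq : IsCoprime (p : ℤ) q)
    {u : ℤ} (h0 : 0 < u) (h1 : u < p) :
    cL p q (u + (p : ℤ)) = (cL p q ((p : ℤ) - u))⁻¹ := by
  unfold cL
  have e1 : del p q (u + (p:ℤ)) = - del p q u := del_add_p hp3 hq u
  have e2 : del p q ((p:ℤ) - u) = del p q u := by
    rw [show (p:ℤ) - u = -u + (p:ℤ) by ring, del_add_p hp3 hq, del_neg hp3 hpq h0 h1]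
    ring
  have e3 : aL (u + (p:ℤ)) = aL ((p:ℤ) - u) := aL_congr (by omega)
  rw [e1, e2, e3, zpow_neg]

lemma cL_neg (hp3 : 3 ≤ p) (hpq : IsCoprime (p : ℤ) q) {u : ℤ} (h0 : 0 < u) (h1 : u < p) :
    (cL p q (-u))⁻¹ = cL p q u := by
  unfold cL
  rw [del_neg hp3 hpq h0 h1, aL_congr (show (-u) % 2 = u % 2 by omega), zpow_neg, inv_inv]

lemma dd_pal (hp3 : 3 ≤ p) (hq : q % 2 = 1) (hpq : IsCoprime (p : ℤ) q)
    {u : ℤ} (h0 : 0 < u) (h1 : u < p) :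
    dd p q ((p : ℤ) + u) = (dd p q ((p : ℤ) - u))⁻¹ := by
  unfold dd
  have e1 : epsI p q ((p:ℤ) + u) = - epsI p q u := by
    rw [show (p:ℤ) + u = u + (p:ℤ) by ring, epsI_add_p hp3 hq]
  have e2 : epsI p q ((p:ℤ) - u) = epsI p q u := epsI_p_sub hp3 hq (ndvd hp3 hpq h0 h1)
  have e3 : aL ((p:ℤ) + u + 1) = aL ((p:ℤ) - u + 1) := aL_congr (by omega)
  rw [e1, e2, e3, zpow_neg]

end Words

section Rot

variable {p : ℕ} {q : ℤ}

lemma conj_step (f : ℤ → F2) (l : ℕ) (s : ℤ) (hper : f (s + ((l : ℤ) + 1)) = f s) :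
    prodW f (s + 1) (l + 1) = (f s)⁻¹ * prodW f s (l + 1) * f s := by
  have head : prodW f s (l + 1) = f s * prodW f (s + 1) l := by
    rw [show l + 1 = 1 + l by omega, prodW_add, prodW_one]
    norm_num
  have tail : prodW f (s + 1) (l + 1) = prodW f (s + 1) l * f s := by
    rw [prodW_add, prodW_one, show s + 1 + (l : ℤ) = s + ((l : ℤ) + 1) by ring, hper]
  rw [tail, head]
  group

lemma RR_succ (hp3 : 3 ≤ p) (s : ℤ) :
    prodW (cL p q) (s + 1) (2 * p)
      = (cL p q s)⁻¹ * prodW (cL p q) s (2 * p) * cL p q s := by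
  have h2p : 2 * p = (2 * p - 1) + 1 := by omega
  rw [h2p]
  apply conj_step
  rw [show s + (((2 * p - 1 : ℕ) : ℤ) + 1) = s + 2 * (p : ℤ) by push_cast; omega]
  exact cL_period hp3 s

lemma RR_conj (hp3 : 3 ≤ p) (s : ℤ) (l : ℕ) :
    prodW (cL p q) (s + (l : ℤ)) (2 * p)
      = (prodW (cL p q) s l)⁻¹ * prodW (cL p q) s (2 * p) * prodW (cL p q) s l := by
  induction l with
  | zero =>
    simp only [Nat.cast_zero, add_zero, prodW, List.range_zero, List.map_nil,
      List.prod_nil, inv_one, one_mul, mul_one]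
  | succ l ih =>
    have h1 : s + ((l + 1 : ℕ) : ℤ) = (s + (l : ℤ)) + 1 := by push_cast; ring
    have h2 : prodW (cL p q) s (l + 1) = prodW (cL p q) s l * cL p q (s + (l : ℤ)) := by
      rw [prodW_add, prodW_one]
    rw [h1, RR_succ hp3, ih, h2]
    group

end Rot

section WordId

variable {p : ℕ} {q : ℤ}

lemma term_eq (hp3 : 3 ≤ p) (hpq : IsCoprime (p : ℤ) q) {i : ℕ} (hi : i + 1 < p) :
    (if (i + 1) % 2 = 1 then g1 else g2) ^ eps p q (i + 1) = cL p q (1 + (i : ℤ)) := by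
  have hc : (1 + (i : ℤ)) = ((i + 1 : ℕ) : ℤ) := by push_cast; ring
  unfold cL
  rw [hc, del_eq_epsI hp3 hpq (by exact_mod_cast Nat.succ_pos i) (by exact_mod_cast hi),
    ← eps_eq_epsI hp3, aL_natCast]

lemma termD_eq (hp3 : 3 ≤ p) {i : ℕ} :
    (if (i + 1) % 2 = 1 then g2 else g1) ^ eps p q (i + 1) = dd p q (1 + (i : ℤ)) := by
  unfold dd
  have hc : (1 + (i : ℤ)) + 1 = ((i + 2 : ℕ) : ℤ) := by push_cast; ring
  have hc2 : (1 + (i : ℤ)) = ((i + 1 : ℕ) : ℤ) := by push_cast; ring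
  rw [hc, aL_natCast, hc2, ← eps_eq_epsI hp3]
  congr 1
  rcases Nat.mod_two_eq_zero_or_one i with h | h
  · rw [if_pos (by omega), if_neg (by omega)]
  · rw [if_neg (by omega), if_pos (by omega)]

lemma wWord_eq (hp3 : 3 ≤ p) (hpq : IsCoprime (p : ℤ) q) :
    wWord p q = prodW (cL p q) 1 (p - 1) := by
  unfold wWord prodW
  congr 1
  apply List.map_congr_left
  intro i hi
  have h1 : i < p - 1 := List.mem_range.mp hi
  exact term_eq hp3 hpq (by omega)

lemma wDag_eq (hp3 : 3 ≤ p) : wDagWord p q = prodW (dd p q) 1 (p - 1) := by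
  unfold wDagWord prodW
  congr 1
  apply List.map_congr_left
  intro i hi
  exact termD_eq hp3

lemma wWord_inv (hp3 : 3 ≤ p) (hq : q % 2 = 1) (hpq : IsCoprime (p : ℤ) q) :
    (wWord p q)⁻¹ = prodW (cL p q) ((p : ℤ) + 1) (p - 1) := by
  rw [wWord_eq hp3 hpq]
  unfold prodW
  rw [prod_range_inv]
  congr 1
  apply List.map_congr_left
  intro j hj
  have hj' : j < p - 1 := List.mem_range.mp hj
  have h1 : (p : ℤ) + 1 + (j : ℤ) = (1 + (j : ℤ)) + (p : ℤ) := by ring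
  rw [h1, cL_pal hp3 hq hpq (by omega) (by omega)]
  congr 2
  omega

lemma wDag_inv (hp3 : 3 ≤ p) (hq : q % 2 = 1) (hpq : IsCoprime (p : ℤ) q) :
    (wDagWord p q)⁻¹ = prodW (dd p q) ((p : ℤ) + 1) (p - 1) := by
  rw [wDag_eq hp3]
  unfold prodW
  rw [prod_range_inv]
  congr 1
  apply List.map_congr_left
  intro j hj
  have hj' : j < p - 1 := List.mem_range.mp hj
  have h1 : (p : ℤ) + 1 + (j : ℤ) = (p : ℤ) + (1 + (j : ℤ)) := by ring
  rw [h1, dd_pal hp3 hq hpq (by omega) (by omega)]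
  congr 2
  omega

lemma dd_zero : dd p q 0 = g1 := by
  unfold dd
  rw [epsI_zero, zpow_one, show (0 : ℤ) + 1 = 1 by norm_num, aL_one]

lemma dd_p (hp3 : 3 ≤ p) (hq : q % 2 = 1) (hpz : (p : ℤ) % 2 = 1) :
    dd p q (p : ℤ) = g2⁻¹ := by
  unfold dd
  rw [epsI_p hp3 hq, zpow_neg, zpow_one]
  unfold aL
  rw [if_pos (by omega)]

lemma r_eq (hp3 : 3 ≤ p) (hq : q % 2 = 1) (hpq : IsCoprime (p : ℤ) q) (hpz : (p : ℤ) % 2 = 1) :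
    wWord p q * g1 * (wWord p q)⁻¹ * g2⁻¹ = prodW (cL p q) 1 (2 * p) := by
  have hsplit : 2 * p = (p - 1) + (1 + ((p - 1) + 1)) := by omega
  rw [hsplit, prodW_add, prodW_add, prodW_add, prodW_one]
  have r2 : (1 : ℤ) + ((p - 1 : ℕ) : ℤ) = (p : ℤ) := by omega
  rw [r2]
  have r3 : (p : ℤ) + ((1 : ℕ) : ℤ) = (p : ℤ) + 1 := by norm_num
  rw [r3]
  have r4 : (p : ℤ) + 1 + ((p - 1 : ℕ) : ℤ) = 2 * (p : ℤ) := by omega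
  rw [r4, prodW_one, cL_p hp3 hq hpz, cL_two_p hp3 hq, ← wWord_eq hp3 hpq,
    ← wWord_inv hp3 hq hpq]
  group

lemma rhs_eq (hp3 : 3 ≤ p) (hq : q % 2 = 1) (hpq : IsCoprime (p : ℤ) q)
    (hpz : (p : ℤ) % 2 = 1) :
    g1 * wDagWord p q * g2⁻¹ * (wDagWord p q)⁻¹ = prodW (dd p q) 0 (2 * p) := by
  have hsplit : 2 * p = 1 + ((p - 1) + (1 + (p - 1))) := by omega
  rw [hsplit, prodW_add, prodW_add, prodW_add, prodW_one]
  have r1 : (0 : ℤ) + ((1 : ℕ) : ℤ) = 1 := by norm_num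
  rw [r1]
  have r2 : (1 : ℤ) + ((p - 1 : ℕ) : ℤ) = (p : ℤ) := by omega
  rw [r2]
  have r3 : (p : ℤ) + ((1 : ℕ) : ℤ) = (p : ℤ) + 1 := by norm_num
  rw [r3, prodW_one, dd_zero, dd_p hp3 hq hpz, ← wDag_eq hp3, ← wDag_inv hp3 hq hpq]
  group

end WordId

end Stmt6Aux

open Stmt6Aux

theorem stmt_6 (p : ℕ) (q : ℤ) (hp : Odd p) (hq : Odd q)
    (hpq : IsCoprime (p : ℤ) q) (hp3 : 3 ≤ p)
    (hql : -(p : ℤ) < q) (hqu : q < (p : ℤ))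
    (k : ℕ) (hk0 : 0 < k) (hkp : k < p) (hkodd : Odd k)
    (hk : (k : ℤ) * q ≡ 1 [ZMOD (2 * p)] ∨ (k : ℤ) * q ≡ -1 [ZMOD (2 * p)]) :
    (vPrime p q k)⁻¹ * (wWord p q * g1 * (wWord p q)⁻¹ * g2⁻¹) * vPrime p q k =
      g1 * wDagWord p q * g2⁻¹ * (wDagWord p q)⁻¹ := by
  have hq2 : q % 2 = 1 := Int.odd_iff.mp hq
  have hpz : (p : ℤ) % 2 = 1 := by
    have := Nat.odd_iff.mp hp; omega
  have hkz : (k : ℤ) % 2 = 1 := by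
    have := Nat.odd_iff.mp hkodd; omega
  have hr := r_eq (p := p) (q := q) hp3 hq2 hpq hpz
  have hrhs := rhs_eq (p := p) (q := q) hp3 hq2 hpq hpz
  rcases hk with hk1 | hk1
  · -- case kq ≡ 1 (mod 2p)
    obtain ⟨c, hc⟩ := hk1.dvd
    have hm : (k : ℤ) * q = 2 * (p : ℤ) * (-c) + 1 := by linear_combination -hc
    have hepsk : eps p q k = 1 := by
      rw [eps_eq_epsI hp3]
      unfold epsI
      have h1 : (k : ℤ) * q = 1 + (p : ℤ) * (2 * (-c)) := by linear_combination hm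
      rw [h1, Int.add_mul_ediv_left _ _ (by have := hp0' hp3; omega),
        Int.ediv_eq_zero_of_lt (by norm_num) (by have := hp0' hp3; omega)]
      rw [if_pos (by omega)]
    have hv : vPrime p q k = prodW (cL p q) 1 (k - 1) := by
      unfold vPrime prodW
      rw [if_pos hepsk]
      congr 1
      apply List.map_congr_left
      intro i hi
      have h1 : i < k - 1 := List.mem_range.mp hi
      exact term_eq hp3 hpq (by omega)
    rw [hv, hr, ← RR_conj hp3 1 (k - 1),
      show (1 : ℤ) + ((k - 1 : ℕ) : ℤ) = (k : ℤ) by omega, hrhs]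
    unfold prodW
    congr 1
    apply List.map_congr_left
    intro j hj
    unfold cL dd
    rw [del_shift hp3 hm,
      aL_congr (show ((k : ℤ) + (j : ℤ)) % 2 = ((0 : ℤ) + (j : ℤ) + 1) % 2 by omega)]
    congr 1
    norm_num
  · -- case kq ≡ -1 (mod 2p)
    obtain ⟨c, hc⟩ := hk1.dvd
    have hm : (-(k : ℤ)) * q = 2 * (p : ℤ) * c + 1 := by linear_combination hc
    have hepsk : eps p q k = -1 := by
      rw [eps_eq_epsI hp3]
      unfold epsI
      have h1 : (k : ℤ) * q = ((p : ℤ) - 1) + (p : ℤ) * (2 * (-c) - 1) := by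
        linear_combination -hc
      rw [h1, Int.add_mul_ediv_left _ _ (by have := hp0' hp3; omega),
        Int.ediv_eq_zero_of_lt (by have := hp0' hp3; omega)
          (by have := hp0' hp3; omega)]
      rw [if_neg (by omega)]
    have hv : vPrime p q k = g2 * prodW (cL p q) 1 k := by
      unfold vPrime prodW
      rw [if_neg (by rw [hepsk]; norm_num)]
      congr 2
      apply List.map_congr_left
      intro i hi
      have h1 : i < k := List.mem_range.mp hi
      exact term_eq hp3 hpq (by omega)
    have hU : (prodW (cL p q) (-(k : ℤ)) (k + 1))⁻¹ = g2 * prodW (cL p q) 1 k := by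
      unfold prodW
      rw [prod_range_inv]
      have e0 : ((List.range (k + 1)).map
            (fun i => (cL p q (-(k : ℤ) + ((k + 1 - 1 - i : ℕ) : ℤ)))⁻¹))
          = (List.range (k + 1)).map (fun (i : ℕ) => (cL p q (-(i : ℤ)))⁻¹) := by
        apply List.map_congr_left
        intro i hi
        have hik : i < k + 1 := List.mem_range.mp hi
        congr 2
        omega
      rw [e0, List.range_succ_eq_map, List.map_cons, List.prod_cons, List.map_map]
      congr 1
      · rw [show (-((0 : ℕ) : ℤ)) = (0 : ℤ) by norm_num, cL_zero hp3, inv_inv]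
      · congr 1
        apply List.map_congr_left
        intro i hi
        have hik : i < k := List.mem_range.mp hi
        simp only [Function.comp_apply, Nat.succ_eq_add_one]
        rw [show (-((i + 1 : ℕ) : ℤ)) = -(((i : ℤ)) + 1) by push_cast; ring,
          cL_neg hp3 hpq (by omega) (by omega)]
        congr 1
        push_cast
        ring
    have hconj := RR_conj (q := q) hp3 (-(k : ℤ)) (k + 1)
    rw [show -(k : ℤ) + ((k + 1 : ℕ) : ℤ) = 1 by omega] at hconj
    rw [hv, hr, ← hU, hconj, hrhs]
    have key : ∀ X Y : F2, (X⁻¹)⁻¹ * (X⁻¹ * Y * X) * X⁻¹ = Y := fun X Y => by group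
    rw [key]
    unfold prodW
    congr 1
    apply List.map_congr_left
    intro j hj
    unfold cL dd
    rw [del_shift hp3 hm,
      aL_congr (show (-(k : ℤ) + (j : ℤ)) % 2 = ((0 : ℤ) + (j : ℤ) + 1) % 2 by omega)]
    congr 1
    norm_num
end

section
/- Let p, q, ε_i, k be as in the context with q ≠ 1 and q ≠ −1. Then 3 ≤ k ≤ p − 2 and ε_{k−1} = −ε_{k+1}; equivalently, the triple (ε_{k−1}, ε_k, ε_{k+1}) is one of (1,1,−1), (1,−1,−1), (−1,1,1), (−1,−1,1). -/
theorem stmt_7 (p : ℕ) (q : ℤ) (hp : Odd p) (hq : Odd q)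
    (hpq : IsCoprime (p : ℤ) q) (hp3 : 3 ≤ p)
    (hql : -(p : ℤ) < q) (hqu : q < (p : ℤ))
    (hq1 : q ≠ 1) (hq1' : q ≠ -1)
    (k : ℕ) (hk0 : 0 < k) (hkp : k < p) (hkodd : Odd k)
    (hk : (k : ℤ) * q ≡ 1 [ZMOD (2 * p)] ∨ (k : ℤ) * q ≡ -1 [ZMOD (2 * p)]) :
    3 ≤ k ∧ k ≤ p - 2 ∧ eps p q (k - 1) = -eps p q (k + 1) := by
  obtain ⟨e, he, hmd⟩ : ∃ e : ℤ, (e = 1 ∨ e = -1) ∧ ((2 * p : ℕ) : ℤ) ∣ (e - (k : ℤ) * q) := by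
    rcases hk with h | h
    · exact ⟨1, Or.inl rfl, h.dvd⟩
    · exact ⟨-1, Or.inr rfl, h.dvd⟩
  obtain ⟨m, hm⟩ := hmd
  push_cast at hm
  have hp0 : (0 : ℤ) < p := by exact_mod_cast lt_of_lt_of_le (by norm_num) hp3
  obtain ⟨a, ha⟩ := hq
  obtain ⟨b, hb⟩ := hp
  obtain ⟨c, hc⟩ := hkodd
  have he1 : -1 ≤ e ∧ e ≤ 1 := by rcases he with rfl | rfl <;> norm_num
  have hq3 : (3 : ℤ) ≤ q ∨ q ≤ -3 := by omega
  have hk3 : 3 ≤ k := by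
    by_contra h
    have hk1 : k = 1 := by omega
    subst hk1
    push_cast at hm
    rcases lt_trichotomy m 0 with h0 | h0 | h0
    · nlinarith [mul_pos hp0 (show (0:ℤ) < -m by omega)]
    · subst h0; omega
    · nlinarith [mul_pos hp0 h0]
  have hkp2 : k ≤ p - 2 := by omega
  refine ⟨hk3, hkp2, ?_⟩
  have hc1 : ((k - 1 : ℕ) : ℤ) = (k : ℤ) - 1 := by omega
  have hc2 : ((k + 1 : ℕ) : ℤ) = (k : ℤ) + 1 := by push_cast; ring
  have e1 : ((k : ℤ) - 1) * q = (e - q) + (p : ℤ) * (-2 * m) := by linear_combination -hm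
  have e2 : ((k : ℤ) + 1) * q = (e + q) + (p : ℤ) * (-2 * m) := by linear_combination -hm
  simp only [eps, hc1, hc2]
  rw [e1, e2, Int.fdiv_eq_ediv_of_nonneg _ hp0.le, Int.fdiv_eq_ediv_of_nonneg _ hp0.le,
    Int.add_mul_ediv_left _ _ hp0.ne', Int.add_mul_ediv_left _ _ hp0.ne']
  have key : ∀ r : ℤ, 0 ≤ r → r < p → r / (p : ℤ) = 0 := fun r h0 h1 =>
    Int.ediv_eq_zero_of_lt h0 h1
  have key2 : ∀ r : ℤ, -(p : ℤ) ≤ r → r < 0 → r / (p : ℤ) = -1 := by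
    intro r h0 h1
    have hr : r = (r + p) + (p : ℤ) * (-1) := by ring
    rw [hr, Int.add_mul_ediv_left _ _ hp0.ne', Int.ediv_eq_zero_of_lt (by omega) (by omega)]; norm_num
  rcases he with rfl | rfl <;> rcases hq3 with hq3 | hq3
  · rw [key2 _ (by omega) (by omega), key _ (by omega) (by omega)]
    split_ifs <;> omega
  · rw [key _ (by omega) (by omega), key2 _ (by omega) (by omega)]
    split_ifs <;> omega
  · rw [key2 _ (by omega) (by omega), key _ (by omega) (by omega)]
    split_ifs <;> omega
  · rw [key _ (by omega) (by omega), key2 _ (by omega) (by omega)]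
    split_ifs <;> omega
end

section
/- Let n ≥ 1, let f₁, …, f_{2n} ∈ {1, −1}, and let d ∈ ℂ with d ≠ 0. In M₂(ℂ[u]) set h_j = G₁^{f₁} G₂^{f₂} ⋯ G₁^{f_{2j−1}} G₂^{f_{2j}} for 1 ≤ j ≤ n. Then for each j there exist s_j ∈ {1, −1} and complex numbers A_j, B_j such that, writing deg for degree in u: s_j·(h_j)₁₁ − (u^j + A_j u^{j−1}) has degree ≤ j−2; s_j·(h_j)₁₂ + f_{2j} d^{−f_{2j}} u^{j−1} has degree ≤ j−2; s_j·(h_j)₂₁ − f₁ d^{−f₁}(u^j + B_j u^{j−1}) has degree ≤ j−2; s_j·(h_j)₂₂ + f₁ f_{2j} d^{−f₁−f_{2j}} u^{j−1} has degree ≤ j−2. Moreover the difference A_j − B_j does not depend on j, i.e. A_j − B_j = A₁ − B₁ for all 1 ≤ j ≤ n. -/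
open Matrix Polynomial

/-- `h_j = G₁^{f₁} G₂^{f₂} ⋯ G₁^{f_{2j−1}} G₂^{f_{2j}}`. -/
noncomputable def hWord (f : ℕ → ℤ) (d : ℂ) (j : ℕ) :
    Matrix (Fin 2) (Fin 2) (Polynomial ℂ) :=
  ((List.range (2 * j)).map
    (fun i => (if (i + 1) % 2 = 1 then G1 d else G2 d) ^ f (i + 1))).prod

/-!
Track the rows of the signed word `s • h_j` one at a time. Modulo polynomials of degree
`< j - 1`, each row `(P, Q)` has the shape `P ≡ γ (u^j + A u^(j-1))`, `Q ≡ -γ b u^(j-1)`,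
where `b = f_{2j} d^(-f_{2j})` comes from the last block and is the same for both rows.
The block `G₁^e G₂^n` is `[[d^e d^n - e n u, e d^(-n)], [-n d^(-e) u, d^(-e) d^(-n)]]`;
right multiplication by it followed by the sign `-e n` preserves the shape and lowers `A`
by `e n (d^e d^n + n d^(-e) b)`, which does not depend on the row. So both rows are
shifted alike and `A_j - B_j` keeps its value at `j = 1`.
-/

theorem intCast_mul_self_of_isUnit {R : Type*} [Ring R] {e : ℤ} (he : IsUnit e) :
    (e : R) * e = 1 := by
  rw [← Int.cast_mul, Int.isUnit_mul_self he, Int.cast_one]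

theorem intCast_mul_mul_cancel {R : Type*} [CommRing R] {e : ℤ} (he : IsUnit e) (n : ℤ)
    (x : R) : ((e * n : ℤ) : R) * (e * x) = n * x := by
  push_cast
  linear_combination (n * x) * intCast_mul_self_of_isUnit (R := R) he

namespace Polynomial
variable {R : Type*} [CommRing R]

theorem mul_X_mem_degreeLT {k : ℕ} {p : R[X]} (hp : p ∈ degreeLT R k) :
    p * X ∈ degreeLT R (k + 1) := by
  nontriviality R
  rw [mem_degreeLT] at hp ⊢
  rw [degree_mul_X, Nat.cast_succ]
  exact WithBot.add_lt_add_right (by simp) hp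

theorem C_mul_X_pow_mem_degreeLT (a : R) (k : ℕ) : C a * X ^ k ∈ degreeLT R (k + 1) :=
  mem_degreeLT.mpr ((degree_C_mul_X_pow_le k a).trans_lt (by exact_mod_cast k.lt_succ_self))

end Polynomial

section LeadingRow
variable {R : Type*} [CommRing R]

def IsLeadingRow (k : ℕ) (γ A b : R) (v : Fin 2 → R[X]) : Prop :=
  v 0 - C γ * (X ^ (k + 1) + C A * X ^ k) ∈ degreeLT R k ∧
    v 1 + C (γ * b) * X ^ k ∈ degreeLT R k

theorem IsLeadingRow.smul_vecMul {k : ℕ} {γ A b σ w m c t : R} (hσ : σ * σ = 1)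
    {v : Fin 2 → R[X]} (hv : IsLeadingRow k γ A b v) :
    IsLeadingRow (k + 1) γ (A - σ * (w + c * b)) (σ * m)
      (-σ • v ᵥ* !![C w - C σ * X, C m; -(C c * X), C t]) := by
  obtain ⟨hp, hq⟩ := hv
  set p := v 0 - C γ * (X ^ (k + 1) + C A * X ^ k)
  set q := v 1 + C (γ * b) * X ^ k
  have hk : degreeLT R k ≤ degreeLT R (k + 1) := degreeLT_mono k.le_succ
  simp only [IsLeadingRow, vecMul, dotProduct, Fin.sum_univ_two, Pi.smul_apply, smul_eq_C_mul,
    of_apply, cons_val', cons_val_zero, cons_val_one, empty_val', cons_val_fin_one]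
  constructor
  · have h : C (-σ) * (v 0 * (C w - C σ * X) + v 1 * -(C c * X)) -
          C γ * (X ^ (k + 1 + 1) + C (A - σ * (w + c * b)) * X ^ (k + 1)) =
        C (-(σ * γ * w * A)) * X ^ k + (-(σ * w)) • p + p * X + (σ * c) • (q * X) := by
      have hσC : C σ * C σ = (1 : R[X]) := by rw [← C_mul, hσ, C_1]
      simp only [smul_eq_C_mul, map_neg, map_mul, map_sub, map_add, p, q]
      linear_combination v 0 * X * hσC
    rw [h]
    exact add_mem (add_mem (add_mem (C_mul_X_pow_mem_degreeLT _ _)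
      (Submodule.smul_mem _ _ (hk hp))) (mul_X_mem_degreeLT hp))
      (Submodule.smul_mem _ _ (mul_X_mem_degreeLT hq))
  · have h : C (-σ) * (v 0 * C m + v 1 * C t) + C (γ * (σ * m)) * X ^ (k + 1) =
        C (σ * (t * γ * b - m * γ * A)) * X ^ k + (-(σ * m)) • p + (-(σ * t)) • q := by
      simp only [smul_eq_C_mul, map_neg, map_mul, map_sub, p, q]
      ring
    rw [h]
    exact add_mem (add_mem (C_mul_X_pow_mem_degreeLT _ _) (Submodule.smul_mem _ _ (hk hp)))
      (Submodule.smul_mem _ _ (hk hq))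

theorem isLeadingRow_smul_block {σ w m c t : R} (hσ : σ * σ = 1) (hcm : σ * t = c * m) :
    IsLeadingRow 0 1 (-(σ * w)) (σ * m) (-σ • !![C w - C σ * X, C m; -(C c * X), C t] 0) ∧
      IsLeadingRow 0 (σ * c) 0 (σ * m) (-σ • !![C w - C σ * X, C m; -(C c * X), C t] 1) := by
  have hσC : C σ * C σ = (1 : R[X]) := by rw [← C_mul, hσ, C_1]
  have hcmC : C σ * C t = C c * (C m : R[X]) := by rw [← C_mul, hcm, C_mul]
  refine ⟨⟨?_, ?_⟩, ⟨?_, ?_⟩⟩ <;> convert (degreeLT R 0).zero_mem using 1 <;>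
    simp only [Pi.smul_apply, smul_eq_C_mul, of_apply, cons_val', cons_val_zero, cons_val_one,
      empty_val', cons_val_fin_one, map_neg, map_mul, map_one, map_zero]
  · linear_combination (X : R[X]) * hσC
  · ring
  · ring
  · linear_combination C c * C m * hσC - hcmC

end LeadingRow

section Words
variable {d : ℂ}

theorem G1_zpow (hd : d ≠ 0) {e : ℤ} (he : e = 1 ∨ e = -1) :
    G1 d ^ e = !![C (d ^ e), C (e : ℂ); 0, C (d ^ (-e))] := by
  rcases he with rfl | rfl
  · simp [G1]
  · rw [Matrix.zpow_neg_one, inv_eq_left_inv]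
    simp [G1, one_fin_two, ← C_mul, hd]

theorem G2_zpow (hd : d ≠ 0) {e : ℤ} (he : e = 1 ∨ e = -1) :
    G2 d ^ e = !![C (d ^ e), 0; -(C (e : ℂ) * X), C (d ^ (-e))] := by
  rcases he with rfl | rfl
  · simp [G2]
  · rw [Matrix.zpow_neg_one, inv_eq_left_inv]
    simp [G2, one_fin_two, ← C_mul, hd]

theorem G1_zpow_mul_G2_zpow (hd : d ≠ 0) {e n : ℤ} (he : e = 1 ∨ e = -1)
    (hn : n = 1 ∨ n = -1) :
    G1 d ^ e * G2 d ^ n =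
      !![C (d ^ e * d ^ n) - C ((e * n : ℤ) : ℂ) * X, C (e * d ^ (-n));
        -(C (n * d ^ (-e)) * X), C (d ^ (-e) * d ^ (-n))] := by
  rw [G1_zpow hd he, G2_zpow hd hn, mul_fin_two]
  refine Matrix.ext fun i j => ?_
  fin_cases i <;> fin_cases j <;> simp <;> ring

theorem hWord_zero (f : ℕ → ℤ) : hWord f d 0 = 1 := by simp [hWord]

theorem hWord_succ (f : ℕ → ℤ) (j : ℕ) :
    hWord f d (j + 1) = hWord f d j * (G1 d ^ f (2 * j + 1) * G2 d ^ f (2 * j + 2)) := by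
  rw [hWord, show 2 * (j + 1) = 2 * j + 1 + 1 by ring, List.range_succ, List.range_succ]
  simp only [List.map_append, List.prod_append, List.map_cons, List.map_nil, List.prod_cons,
    List.prod_nil, mul_one, mul_assoc]
  rw [if_pos (by omega), if_neg (by omega), hWord]

theorem smul_hWord_succ (hd : d ≠ 0) {f : ℕ → ℤ} {j : ℕ} {e n : ℤ}
    (hfe : f (2 * j + 1) = e) (hfn : f (2 * j + 2) = n) (he : IsUnit e) (hn : IsUnit n) (s : ℤ) :
    (s * -(e * n)) • hWord f d (j + 1) = -((e * n : ℤ) : ℂ) •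
      ((s • hWord f d j) * !![C (d ^ e * d ^ n) - C ((e * n : ℤ) : ℂ) * X, C (e * d ^ (-n));
        -(C (n * d ^ (-e)) * X), C (d ^ (-e) * d ^ (-n))]) := by
  rw [← G1_zpow_mul_G2_zpow hd (Int.isUnit_iff.mp he) (Int.isUnit_iff.mp hn), hWord_succ,
    hfe, hfn, smul_mul_assoc, ← Int.cast_smul_eq_zsmul ℂ, ← Int.cast_smul_eq_zsmul ℂ s,
    smul_smul]
  congr 1
  push_cast
  ring

def HasLeadingRows (f : ℕ → ℤ) (d : ℂ) (k : ℕ) (s : ℤ) (A B : ℂ) : Prop :=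
  IsLeadingRow k 1 A (f (2 * (k + 1)) * d ^ (-f (2 * (k + 1)))) ((s • hWord f d (k + 1)) 0) ∧
    IsLeadingRow k (f 1 * d ^ (-f 1)) B (f (2 * (k + 1)) * d ^ (-f (2 * (k + 1))))
      ((s • hWord f d (k + 1)) 1)

theorem hasLeadingRows_zero (hd : d ≠ 0) {f : ℕ → ℤ} (he : IsUnit (f 1))
    (hn : IsUnit (f 2)) :
    HasLeadingRows f d 0 (-(f 1 * f 2)) (-(((f 1 * f 2 : ℤ) : ℂ) * (d ^ f 1 * d ^ f 2))) 0 := by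
  have hword := smul_hWord_succ hd (j := 0) rfl rfl he hn 1
  simp only [Nat.mul_zero, Nat.zero_add, one_mul, hWord_zero, one_smul] at hword
  obtain ⟨h0, h1⟩ := isLeadingRow_smul_block (w := d ^ f 1 * d ^ f 2)
    (intCast_mul_self_of_isUnit (he.mul hn))
    (show ((f 1 * f 2 : ℤ) : ℂ) * (d ^ (-f 1) * d ^ (-f 2)) =
      f 2 * d ^ (-f 1) * (f 1 * d ^ (-f 2)) by push_cast; ring)
  have hc : ((f 1 * f 2 : ℤ) : ℂ) * (f 2 * d ^ (-f 1)) = f 1 * d ^ (-f 1) := by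
    rw [mul_comm (f 1), intCast_mul_mul_cancel hn]
  rw [intCast_mul_mul_cancel he] at h0 h1
  rw [hc] at h1
  unfold HasLeadingRows
  rw [hword]
  exact ⟨h0, h1⟩

theorem HasLeadingRows.succ (hd : d ≠ 0) {f : ℕ → ℤ} {k : ℕ} {s : ℤ} {A B : ℂ}
    (h : HasLeadingRows f d k s A B) (he : IsUnit (f (2 * (k + 1) + 1)))
    (hn : IsUnit (f (2 * (k + 1) + 2))) :
    ∃ δ : ℂ, HasLeadingRows f d (k + 1) (s * -(f (2 * (k + 1) + 1) * f (2 * (k + 1) + 2)))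
      (A - δ) (B - δ) := by
  have hword := smul_hWord_succ hd rfl rfl he hn s
  have hσ := intCast_mul_self_of_isUnit (R := ℂ) (he.mul hn)
  obtain ⟨h0, h1⟩ := h
  unfold HasLeadingRows
  rw [show 2 * (k + 1 + 1) = 2 * (k + 1) + 2 from rfl,
    ← intCast_mul_mul_cancel he (f (2 * (k + 1) + 2))]
  exact ⟨_, by rw [hword]; exact h0.smul_vecMul hσ, by rw [hword]; exact h1.smul_vecMul hσ⟩

theorem exists_hasLeadingRows (hd : d ≠ 0) {f : ℕ → ℤ} (k : ℕ)
    (hf : ∀ i, 1 ≤ i → i ≤ 2 * (k + 1) → IsUnit (f i)) :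
    ∃ s : ℤ, IsUnit s ∧ ∃ A B : ℂ, HasLeadingRows f d k s A B ∧
      A - B = -(((f 1 * f 2 : ℤ) : ℂ) * (d ^ f 1 * d ^ f 2)) := by
  induction k with
  | zero =>
    have he := hf 1 le_rfl (by norm_num)
    have hn := hf 2 (by norm_num) le_rfl
    exact ⟨_, (he.mul hn).neg, _, _, hasLeadingRows_zero hd he hn, sub_zero _⟩
  | succ k ih =>
    obtain ⟨s, hs, A, B, h, hAB⟩ := ih fun i hi hik => hf i hi (by omega)
    have he := hf (2 * (k + 1) + 1) (by omega) (by omega)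
    have hn := hf (2 * (k + 1) + 2) (by omega) (by omega)
    obtain ⟨δ, hδ⟩ := h.succ hd he hn
    exact ⟨_, hs.mul (he.mul hn).neg, _, _, hδ, (sub_sub_sub_cancel_right A B δ).trans hAB⟩

end Words

theorem stmt_9 (n : ℕ) (hn : 1 ≤ n) (f : ℕ → ℤ)
    (hf : ∀ i, 1 ≤ i → i ≤ 2 * n → f i = 1 ∨ f i = -1)
    (d : ℂ) (hd : d ≠ 0) :
    ∃ (s : ℕ → ℤ) (A B : ℕ → ℂ), ∀ j, 1 ≤ j → j ≤ n →
      (s j = 1 ∨ s j = -1) ∧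
      (s j • hWord f d j 0 0 - (X ^ j + C (A j) * X ^ (j - 1))).degree
        < ((j - 1 : ℕ) : WithBot ℕ) ∧
      (s j • hWord f d j 0 1
          + C ((f (2 * j) : ℂ) * d ^ (-f (2 * j))) * X ^ (j - 1)).degree
        < ((j - 1 : ℕ) : WithBot ℕ) ∧
      (s j • hWord f d j 1 0
          - C ((f 1 : ℂ) * d ^ (-f 1)) * (X ^ j + C (B j) * X ^ (j - 1))).degree
        < ((j - 1 : ℕ) : WithBot ℕ) ∧
      (s j • hWord f d j 1 1
          + C ((f 1 : ℂ) * (f (2 * j) : ℂ) * d ^ (-f 1 - f (2 * j))) * X ^ (j - 1)).degree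
        < ((j - 1 : ℕ) : WithBot ℕ) ∧
      A j - B j = A 1 - B 1 := by
  have key : ∀ j, 1 ≤ j → j ≤ n → ∃ (s : ℤ) (A B : ℂ), IsUnit s ∧
      HasLeadingRows f d (j - 1) s A B ∧
      A - B = -(((f 1 * f 2 : ℤ) : ℂ) * (d ^ f 1 * d ^ f 2)) := by
    intro j hj hjn
    obtain ⟨s, hs, A, B, h⟩ := exists_hasLeadingRows hd (j - 1)
      fun i hi hij => Int.isUnit_iff.mpr (hf i hi (by omega))
    exact ⟨s, A, B, hs, h⟩
  choose! s A B hs hrows hAB using key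
  refine ⟨s, A, B, fun j hj hjn => ?_⟩
  obtain ⟨⟨h00, h01⟩, ⟨h10, h11⟩⟩ := hrows j hj hjn
  have hγb : (f 1 * d ^ (-f 1) * (f (2 * j) * d ^ (-f (2 * j))) : ℂ) =
      f 1 * f (2 * j) * d ^ (-f 1 - f (2 * j)) := by
    rw [sub_eq_add_neg, zpow_add₀ hd]; ring
  simp only [Nat.sub_add_cancel hj, C_1, one_mul, hγb, mem_degreeLT] at h00 h01 h10 h11
  exact ⟨Int.isUnit_iff.mp (hs j hj hjn), h00, h01, h10, h11,
    (hAB j hj hjn).trans (hAB 1 le_rfl hn).symm⟩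
end

section
/- (Euler–Jacobi theorem in one variable.) Let f, g ∈ ℂ[X] with f nonconstant, f having nonzero constant term and no repeated complex root, and deg g ≤ deg f − 2. Then the sum over the complex roots α of f of g(α)/f′(α) equals 0, where f′ is the derivative of f (note f′(α) ≠ 0 at every root α since the roots are simple). -/
/-! The roots of a split polynomial `f` with simple roots are Lagrange nodes, and
`f'(α) = lc f · ∏_{β ≠ α} (α - β)`. So `∑ g(α) / f'(α)` is, up to the factor `(lc f)⁻¹`, the
coefficient of `X ^ (deg f - 1)` in the interpolant of `g` on these nodes, i.e. in `g` itself,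
which vanishes because `deg g ≤ deg f - 2`. -/

open Polynomial Finset

namespace Lagrange

theorem sum_eval_div_prod_sub_eq_zero {F : Type*} [Field F] [DecidableEq F] {s : Finset F}
    {P : F[X]} (hP : P.degree + 2 ≤ #s) :
    ∑ x ∈ s, P.eval x / ∏ y ∈ s.erase x, (x - y) = 0 := by
  have hPs : P.degree < ↑(#s - 1) := by
    rcases eq_or_ne P 0 with rfl | hP0
    · exact WithBot.bot_lt_coe _
    rw [degree_eq_natDegree hP0] at hP ⊢
    norm_cast at hP ⊢
    omega
  have hcoeff := coeff_eq_sum (v := id) (Set.injOn_id _)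
    (hPs.trans_le (by exact_mod_cast Nat.sub_le _ 1))
  rw [coeff_eq_zero_of_degree_lt hPs] at hcoeff
  exact hcoeff.symm

end Lagrange

namespace Polynomial.Splits

variable {K : Type*} [Field K] [DecidableEq K] {f : K[X]}

theorem eq_C_leadingCoeff_mul_nodal (hf : f.Splits) (hnd : f.roots.Nodup) :
    f = C f.leadingCoeff * Lagrange.nodal f.roots.toFinset id := by
  conv_lhs => rw [hf.eq_prod_roots]
  rw [Lagrange.nodal_eq, Finset.prod, Multiset.toFinset_val, hnd.dedup]
  simp

theorem eval_derivative_of_nodup (hf : f.Splits) (hnd : f.roots.Nodup) {α : K}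
    (hα : α ∈ f.roots.toFinset) :
    f.derivative.eval α = f.leadingCoeff * ∏ β ∈ f.roots.toFinset.erase α, (α - β) := by
  conv_lhs => rw [hf.eq_C_leadingCoeff_mul_nodal hnd]
  rw [derivative_C_mul, eval_mul, eval_C, ← id_eq α,
    Lagrange.eval_nodal_derivative_eval_node_eq hα, Lagrange.eval_nodal]
  rfl

theorem sum_eval_div_eval_derivative_eq_zero (hf : f.Splits) (hnd : f.roots.Nodup) {g : K[X]}
    (hg : g.degree + 2 ≤ f.degree) :
    ∑ α ∈ f.roots.toFinset, g.eval α / f.derivative.eval α = 0 := by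
  have hcard : #f.roots.toFinset = f.natDegree := by
    rw [Multiset.toFinset_card_of_nodup hnd, hf.natDegree_eq_card_roots]
  calc ∑ α ∈ f.roots.toFinset, g.eval α / f.derivative.eval α
      = f.leadingCoeff⁻¹ *
          ∑ α ∈ f.roots.toFinset, g.eval α / ∏ β ∈ f.roots.toFinset.erase α, (α - β) := by
        rw [mul_sum]
        refine sum_congr rfl fun α hα => ?_
        rw [hf.eval_derivative_of_nodup hnd hα, div_eq_mul_inv, div_eq_mul_inv, mul_inv]
        ring
    _ = 0 := by
        rw [Lagrange.sum_eval_div_prod_sub_eq_zero (hg.trans (hcard ▸ degree_le_natDegree)),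
          mul_zero]

end Polynomial.Splits

theorem stmt_12_general (f g : Polynomial ℂ) (hsimple : f.roots.Nodup)
    (hg : g.degree + 2 ≤ f.degree) :
    ∑ α ∈ f.roots.toFinset, g.eval α / (derivative f).eval α = 0 :=
  (IsAlgClosed.splits f).sum_eval_div_eval_derivative_eq_zero hsimple hg

theorem stmt_12 (f g : Polynomial ℂ) (hf : 0 < f.degree)
    (hf0 : f.coeff 0 ≠ 0) (hsimple : f.roots.Nodup)
    (hg : g.degree + 2 ≤ f.degree) :
    ∑ α ∈ f.roots.toFinset, g.eval α / (derivative f).eval α = 0 :=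
  stmt_12_general f g hsimple hg
end

section
/- Let m ∈ ℂ with m ∉ {0, 1, −1} and let u, z ∈ ℂ. Then the vector (−1, m⁻¹, 0, 0, m⁻¹, z) ∈ ℂ⁶ is not a linear combination of the three columns of the 6×3 matrix with rows (m²−1, −2m, −1), (0, 0, m⁻¹), (0, 0, m⁻²−1), (m²−1, 0, 0), (um, 0, 0), (−u², −2um⁻¹, m⁻²−1). -/
open Matrix

theorem stmt_17 (m : ℂ) (hm0 : m ≠ 0) (hm1 : m ≠ 1) (hm2 : m ≠ -1)
    (u z : ℂ) :
    ¬ ∃ c : Fin 3 → ℂ,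
      (!![m ^ 2 - 1, -2 * m, -1;
          0, 0, m⁻¹;
          0, 0, m⁻¹ ^ 2 - 1;
          m ^ 2 - 1, 0, 0;
          u * m, 0, 0;
          -u ^ 2, -2 * u * m⁻¹, m⁻¹ ^ 2 - 1] : Matrix (Fin 6) (Fin 3) ℂ).mulVec c =
        ![-1, m⁻¹, 0, 0, m⁻¹, z] := by
  rintro ⟨c, hc⟩
  have h2 := congrFun hc 1
  have h3 := congrFun hc 2
  simp [Matrix.mulVec, dotProduct, Fin.sum_univ_three] at h2 h3
  -- h2 : m⁻¹ * c 2 = m⁻¹, h3 : (m⁻¹ ^ 2 - 1) * c 2 = 0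
  have hc2 : c 2 = 1 := by
    field_simp at h2
    exact h2
  have h3' : (m ^ 2)⁻¹ - 1 = 0 := by
    rcases h3 with h | h
    · exact h
    · rw [hc2] at h; exact absurd h one_ne_zero
  have hsq : m ^ 2 = 1 := by
    have := sub_eq_zero.mp h3'
    field_simp at this
    exact this.symm
  have : (m - 1) * (m + 1) = 0 := by ring_nf; linear_combination hsq
  rcases mul_eq_zero.mp this with h | h
  · exact hm1 (by linear_combination h)
  · exact hm2 (by linear_combination h)
end
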